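/- arXiv:0911.4331 — 8 statements merged into one kernel-verified Lean document; each statement's English description precedes it below -/
import Mathlib

section
/- Let x, y, α ∈ ℂ with x ≠ 0, and let U ⊂ ℂ be a disc centred at 0. Let D : U → ℂ be analytic with D(0) = 0 such that 1 + yw ≠ 0 and 1 + D(w) ≠ 0 on U and 1 + D(w) = (1 + yw)·exp(α·D(w)) for all w ∈ U. Let B : U → ℂ be analytic with B(0) = 0 and B'(w) = x·y·(1 + D(w))/(1 + yw) for all w ∈ U. Then for all w ∈ U, B(w) = x·( D(w) − α·D(w)·(1 + D(w)/2) ). -/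
/-!
Differentiating the functional equation `1 + D = (1 + y w) e^{α D}` and using it again to
eliminate the exponential gives `D' (1 - α (1 + D)) = y (1 + D) / (1 + y w)`. The left side is
the derivative of `D - α D (1 + D/2)`, so `B` and `x (D - α D (1 + D/2))` have the same
derivative on the disc and agree at `0`.
-/

open Filter Topology

theorem HasDerivAt.sub_mul_mul_one_add_half {𝕜 : Type*} [NontriviallyNormedField 𝕜]
    [CharZero 𝕜] {D : 𝕜 → 𝕜} {d z : 𝕜} (α : 𝕜) (hD : HasDerivAt D d z) :
    HasDerivAt (fun w => D w - α * D w * (1 + D w / 2)) (d * (1 - α * (1 + D z))) z :=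
  (hD.sub ((hD.const_mul α).mul ((hD.div_const 2).const_add 1))).congr_deriv (by ring)

theorem HasDerivAt.mul_one_sub_eq_of_eventuallyEq_mul_exp {D : ℂ → ℂ} {d z y α : ℂ}
    (hD : HasDerivAt D d z) (hyz : 1 + y * z ≠ 0)
    (heq : (fun w => 1 + D w) =ᶠ[𝓝 z] fun w => (1 + y * w) * Complex.exp (α * D w)) :
    d * (1 - α * (1 + D z)) = y * (1 + D z) / (1 + y * z) := by
  have hrhs : HasDerivAt (fun w => (1 + y * w) * Complex.exp (α * D w))
      (y * Complex.exp (α * D z) + (1 + y * z) * (Complex.exp (α * D z) * (α * d))) z :=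
    ((hasDerivAt_id z).const_mul y |>.const_add 1).mul (hD.const_mul α).cexp
      |>.congr_deriv (by simp)
  have hd : d = y * Complex.exp (α * D z) + (1 + y * z) * (Complex.exp (α * D z) * (α * d)) :=
    (hD.const_add 1).unique (hrhs.congr_of_eventuallyEq heq)
  have hz : 1 + D z = (1 + y * z) * Complex.exp (α * D z) := heq.eq_of_nhds
  rw [eq_div_iff hyz]
  linear_combination (1 + y * z) * hd + (-y - α * d * (1 + y * z)) * hz

theorem stmt_3_general (x y α : ℂ) (r : ℝ)
    (D B : ℂ → ℂ)
    (hD : AnalyticOnNhd ℂ D (Metric.ball (0:ℂ) r)) (hD0 : D 0 = 0)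
    (hy : ∀ w ∈ Metric.ball (0:ℂ) r, 1 + y * w ≠ 0)
    (heq : ∀ w ∈ Metric.ball (0:ℂ) r, 1 + D w = (1 + y * w) * Complex.exp (α * D w))
    (hB : AnalyticOnNhd ℂ B (Metric.ball (0:ℂ) r)) (hB0 : B 0 = 0)
    (hB' : ∀ w ∈ Metric.ball (0:ℂ) r, deriv B w = x * y * (1 + D w) / (1 + y * w)) :
    ∀ w ∈ Metric.ball (0:ℂ) r, B w = x * (D w - α * D w * (1 + D w / 2)) := by
  intro w hw
  have hD' : ∀ z ∈ Metric.ball (0:ℂ) r, HasDerivAt D (deriv D z) z :=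
    fun z hz => (hD z hz).differentiableAt.hasDerivAt
  have hF : ∀ z ∈ Metric.ball (0:ℂ) r,
      HasDerivAt (fun w => x * (D w - α * D w * (1 + D w / 2)))
        (x * (deriv D z * (1 - α * (1 + D z)))) z :=
    fun z hz => ((hD' z hz).sub_mul_mul_one_add_half α).const_mul x
  refine Metric.isOpen_ball.eqOn_of_deriv_eq (convex_ball 0 r).isPreconnected hB.differentiableOn
    (fun z hz => (hF z hz).differentiableAt.differentiableWithinAt) (fun z hz => ?_)
    (Metric.mem_ball_self (Metric.pos_of_mem_ball hw)) (by simp [hB0, hD0]) hw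
  have hDz := (hD' z hz).mul_one_sub_eq_of_eventuallyEq_mul_exp (hy z hz)
    (eventually_of_mem (Metric.isOpen_ball.mem_nhds hz) heq)
  rw [hB' z hz, (hF z hz).deriv, hDz]
  ring

/-- Closed-form integration for the root-degree generating function of rooted
2-connected series-parallel graphs. -/
theorem stmt_3 (x y α : ℂ) (hx : x ≠ 0) (r : ℝ) (hr : 0 < r)
    (D B : ℂ → ℂ)
    (hD : AnalyticOnNhd ℂ D (Metric.ball (0:ℂ) r)) (hD0 : D 0 = 0)
    (hy : ∀ w ∈ Metric.ball (0:ℂ) r, 1 + y * w ≠ 0)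
    (hDne : ∀ w ∈ Metric.ball (0:ℂ) r, 1 + D w ≠ 0)
    (heq : ∀ w ∈ Metric.ball (0:ℂ) r, 1 + D w = (1 + y * w) * Complex.exp (α * D w))
    (hB : AnalyticOnNhd ℂ B (Metric.ball (0:ℂ) r)) (hB0 : B 0 = 0)
    (hB' : ∀ w ∈ Metric.ball (0:ℂ) r, deriv B w = x * y * (1 + D w) / (1 + y * w)) :
    ∀ w ∈ Metric.ball (0:ℂ) r, B w = x * (D w - α * D w * (1 + D w / 2)) :=
  stmt_3_general x y α r D B hD hD0 hy heq hB hB0 hB'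
end

section
/- Let y > 0 and suppose R > 0 and E₀ > 0 satisfy Φ(R,y,E₀) = 0 and Φ_z(R,y,E₀) = 0, where Φ(x,y,z) = (1+y)·exp( x z² / (1 + x z) ) − z − 1 and Φ_z is the partial derivative in z. Then R·E₀ = √(1 + 1/E₀) − 1, i.e. R = (√(1 + 1/E₀) − 1)/E₀, and ( log((1+E₀)/(1+y)) − E₀ )² = E₀³/(E₀ + 1). -/
/-!
Writing `t = R E₀`, the derivative of `u(z) = R z² / (1 + R z)` at `E₀` is `t (2 + t) / (1 + t)²`.
By `Φ = 0` the exponential factor equals `1 + E₀`, so `Φ_z = 0` becomes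
`(1 + E₀) t (2 + t) = (1 + t)²`, i.e. `(1 + t)² = 1 + 1/E₀`; positivity of `t` picks the positive
square root. Finally `log ((1 + E₀)/(1 + y)) = u(E₀)` and `u(E₀) - E₀ = -E₀ / (1 + t)`, whose
square is `E₀² / (1 + 1/E₀)`.
-/

open Real

lemma hasDerivAt_mul_sq_div_one_add_mul {x z : ℝ} (hxz : 1 + x * z ≠ 0) :
    HasDerivAt (fun w => x * w ^ 2 / (1 + x * w))
      (x * z * (2 + x * z) / (1 + x * z) ^ 2) z := by
  have hnum : HasDerivAt (fun w => x * w ^ 2) (x * (2 * z)) z := by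
    simpa using (hasDerivAt_pow 2 z).const_mul x
  have hden : HasDerivAt (fun w => 1 + x * w) x z := by
    simpa using ((hasDerivAt_id z).const_mul x).const_add 1
  refine (hnum.div hden hxz).congr_deriv ?_
  field_simp
  ring

lemma hasDerivAt_one_add_mul_exp_sub {x y z : ℝ} (hxz : 1 + x * z ≠ 0) :
    HasDerivAt (fun w => (1 + y) * exp (x * w ^ 2 / (1 + x * w)) - w - 1)
      ((1 + y) * exp (x * z ^ 2 / (1 + x * z)) * (x * z * (2 + x * z) / (1 + x * z) ^ 2) - 1)
      z := by
  refine ((((hasDerivAt_mul_sq_div_one_add_mul hxz).exp.const_mul (1 + y)).sub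
    (hasDerivAt_id z)).sub_const 1).congr_deriv ?_
  ring

lemma sq_one_add_mul_eq_of_characteristic {x y z : ℝ} (hz : z ≠ 0) (hxz : 1 + x * z ≠ 0)
    (hΦ : (1 + y) * exp (x * z ^ 2 / (1 + x * z)) - z - 1 = 0)
    (hΦz : (1 + y) * exp (x * z ^ 2 / (1 + x * z)) * (x * z * (2 + x * z) / (1 + x * z) ^ 2)
      - 1 = 0) :
    (1 + x * z) ^ 2 = 1 + 1 / z := by
  have hexp : (1 + y) * exp (x * z ^ 2 / (1 + x * z)) = 1 + z := by linarith
  rw [hexp] at hΦz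
  have hchar : (1 + z) * (x * z * (2 + x * z)) = (1 + x * z) ^ 2 := by
    rw [sub_eq_zero, ← mul_div_assoc, div_eq_one_iff_eq (pow_ne_zero 2 hxz)] at hΦz
    linear_combination hΦz
  field_simp
  linear_combination hchar

lemma log_div_eq_of_characteristic {x y z : ℝ} (hz : 1 + z ≠ 0)
    (hΦ : (1 + y) * exp (x * z ^ 2 / (1 + x * z)) - z - 1 = 0) :
    log ((1 + z) / (1 + y)) = x * z ^ 2 / (1 + x * z) := by
  have hexp : (1 + y) * exp (x * z ^ 2 / (1 + x * z)) = 1 + z := by linarith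
  have hy : 1 + y ≠ 0 := by
    rintro hy
    rw [hy, zero_mul] at hexp
    exact hz hexp.symm
  rw [← hexp, mul_div_cancel_left₀ _ hy, log_exp]

lemma sq_mul_sq_div_one_add_mul_sub {x z : ℝ} (hz : 0 < z) (hxz : 1 + x * z ≠ 0)
    (hsq : (1 + x * z) ^ 2 = 1 + 1 / z) :
    (x * z ^ 2 / (1 + x * z) - z) ^ 2 = z ^ 3 / (z + 1) := by
  have hsub : x * z ^ 2 / (1 + x * z) - z = -z / (1 + x * z) := by
    field_simp
    ring
  rw [hsub, div_pow, hsq]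
  field_simp

theorem stmt_4_general (y R E₀ : ℝ) (hR : 0 < R) (hE : 0 < E₀)
    (Φ : ℝ → ℝ → ℝ → ℝ)
    (hΦ : ∀ x y' z, Φ x y' z = (1 + y') * Real.exp (x * z ^ 2 / (1 + x * z)) - z - 1)
    (h1 : Φ R y E₀ = 0)
    (h2 : deriv (fun z => Φ R y z) E₀ = 0) :
    R * E₀ = Real.sqrt (1 + 1 / E₀) - 1 ∧
    R = (Real.sqrt (1 + 1 / E₀) - 1) / E₀ ∧
    (Real.log ((1 + E₀) / (1 + y)) - E₀) ^ 2 = E₀ ^ 3 / (E₀ + 1) := by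
  have ht : 0 < 1 + R * E₀ := by positivity
  rw [hΦ] at h1
  rw [funext (hΦ R y), (hasDerivAt_one_add_mul_exp_sub ht.ne').deriv] at h2
  have hsq := sq_one_add_mul_eq_of_characteristic hE.ne' ht.ne' h1 h2
  have hRE : R * E₀ = sqrt (1 + 1 / E₀) - 1 := by
    rw [← hsq, sqrt_sq ht.le]
    ring
  refine ⟨hRE, by rw [eq_div_iff hE.ne']; exact hRE, ?_⟩
  rw [log_div_eq_of_characteristic (by positivity) h1]
  exact sq_mul_sq_div_one_add_mul_sub hE ht.ne' hsq

/-- Explicit relations for the singularity `R` and singular value `E₀` of the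
series-parallel network generating function, determined by the characteristic
system `Φ = 0`, `Φ_z = 0`. -/
theorem stmt_4 (y R E₀ : ℝ) (hy : 0 < y) (hR : 0 < R) (hE : 0 < E₀)
    (Φ : ℝ → ℝ → ℝ → ℝ)
    (hΦ : ∀ x y' z, Φ x y' z = (1 + y') * Real.exp (x * z ^ 2 / (1 + x * z)) - z - 1)
    (h1 : Φ R y E₀ = 0)
    (h2 : deriv (fun z => Φ R y z) E₀ = 0) :
    R * E₀ = Real.sqrt (1 + 1 / E₀) - 1 ∧
    R = (Real.sqrt (1 + 1 / E₀) - 1) / E₀ ∧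
    (Real.log ((1 + E₀) / (1 + y)) - E₀) ^ 2 = E₀ ^ 3 / (E₀ + 1) :=
  stmt_4_general y R E₀ hR hE Φ hΦ h1 h2
end

section
/- Let y ∈ ℂ \ {0} and let s > 0 be real; set κ = s/(1+s) and define Ψ(w,z) = (1 + y w)·exp(κ z) − z − 1. Then the point (w₀, z₀) with z₀ = 1/s and w₀ = ( (1 + 1/s)·exp(−1/(1+s)) − 1 )/y satisfies both Ψ(w₀, z₀) = 0 and Ψ_z(w₀, z₀) = 0, where Ψ_z is the partial derivative in z. -/
/-!
For fixed `w`, write `Ψ(w, z) = A exp(κ z) - z - 1` with `A = 1 + y w`. The system `Ψ = 0`,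
`Ψ_z = 0` reads `A exp(κ z) = 1 + z` and `A κ exp(κ z) = 1`, so `κ (1 + z) = 1`, i.e.
`z₀ = 1/κ - 1 = 1/s`, and then `A = (1 + z₀) exp(-κ z₀) = (1 + 1/s) exp(-1/(1+s))`.
-/

open Complex

namespace CharacteristicSystem

theorem hasDerivAt_mul_exp_sub (A κ z : ℂ) :
    HasDerivAt (fun z => A * exp (κ * z) - z - 1) (A * (exp (κ * z) * κ) - 1) z := by
  have hexp : HasDerivAt (fun z => exp (κ * z)) (exp (κ * z) * κ) z := by
    simpa using ((hasDerivAt_id z).const_mul κ).cexp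
  exact ((hexp.const_mul A).sub (hasDerivAt_id z)).sub_const 1

theorem mul_exp_sub_eq_zero {A κ z : ℂ} (hA : A = (1 + z) * exp (-(κ * z))) :
    A * exp (κ * z) - z - 1 = 0 := by
  rw [hA, mul_assoc, ← exp_add, neg_add_cancel, exp_zero]
  ring

theorem deriv_mul_exp_sub_eq_zero {A κ z : ℂ} (hA : A = (1 + z) * exp (-(κ * z)))
    (hκz : κ * (1 + z) = 1) :
    deriv (fun z => A * exp (κ * z) - z - 1) z = 0 := by
  have hAexp : A * exp (κ * z) = 1 + z := by
    linear_combination mul_exp_sub_eq_zero hA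
  rw [(hasDerivAt_mul_exp_sub A κ z).deriv]
  linear_combination κ * hAexp + hκz

end CharacteristicSystem

open CharacteristicSystem

/-- Explicit solution of the characteristic system `Ψ = 0`, `Ψ_z = 0` for the
singular coefficient `D₀` in the analysis of 2-connected series-parallel graphs. -/
theorem stmt_6 (y : ℂ) (hy : y ≠ 0) (s : ℝ) (hs : 0 < s)
    (κ : ℂ) (hκ : κ = (s : ℂ) / (1 + s))
    (Ψ : ℂ → ℂ → ℂ)
    (hΨ : ∀ w z, Ψ w z = (1 + y * w) * Complex.exp (κ * z) - z - 1)
    (w₀ z₀ : ℂ)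
    (hz₀ : z₀ = 1 / (s : ℂ))
    (hw₀ : w₀ = ((1 + 1 / (s : ℂ)) * Complex.exp (-1 / (1 + (s : ℂ))) - 1) / y) :
    Ψ w₀ z₀ = 0 ∧ deriv (fun z => Ψ w₀ z) z₀ = 0 := by
  have hs0 : (s : ℂ) ≠ 0 := ofReal_ne_zero.mpr hs.ne'
  have hs1 : 1 + (s : ℂ) ≠ 0 := by exact_mod_cast (by linarith : (0 : ℝ) < 1 + s).ne'
  have hκz₀ : κ * z₀ = 1 / (1 + s) := by rw [hκ, hz₀]; field_simp
  have hκ_one_add : κ * (1 + z₀) = 1 := by rw [hκ, hz₀]; field_simp; ring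
  have hA : 1 + y * w₀ = (1 + z₀) * exp (-(κ * z₀)) := by
    rw [hw₀, hκz₀, hz₀, neg_div]; field_simp; ring
  have hΨw₀ : (fun z => Ψ w₀ z) = fun z => (1 + y * w₀) * exp (κ * z) - z - 1 := funext (hΨ w₀)
  exact ⟨hΨ w₀ z₀ ▸ mul_exp_sub_eq_zero hA,
    hΨw₀ ▸ deriv_mul_exp_sub_eq_zero hA hκ_one_add⟩
end

section
/- Let R, S, W ∈ ℂ with S+1 ≠ 0, R+1 ≠ 0, 1+R+S ≠ 0 and SW+(R+1)² ≠ 0. Set X = R/(S+1)², Y = S/(R+1)², F₁ = R S/(1+R+S)³, and define w₁ = −R S W² + W·(1 + 4S + 3RS² + 5S² + R² + 2R + 2S³ + 3R²S + 7RS) + (R+1)²·(R + 2S + 1 + S²) and w₂ = R²S²W² − 2WRS·(2R²S + 6RS + 2S³ + 3RS² + 5S² + R² + 2R + 4S + 1) + (R+1)²·(R + 2S + 1 + S²)². Then for every s ∈ ℂ with s² = w₂, the number w := ( w₁ + (R − W + 1)·s ) / ( 2(S+1)²·(SW + (R+1)²) ) satisfies the quadratic equation Y(1−w)(X − w F₁)W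 = w F₁·(−XYW² + XYW − XW + 1 − w + X). -/
/-!
After substituting `X = R/(S+1)²`, `Y = S/(R+1)²`, `F₁ = RS/(1+R+S)³`, the difference of the two
sides of the equation is `R S · Q(w) / ((1+R+S)³ (S+1)² (R+1)²)` for the polynomial quadratic
`Q(w) = (S+1)²(SW+(R+1)²) w² - w₁ w + W(1+R+S)³`, whose discriminant factors as `(R-W+1)² w₂`.
The claimed `w` is therefore a root of `Q` by the quadratic formula.
-/

namespace BrownTutte

variable {K : Type*} [Field K]

def w₁ (R S W : K) : K :=
  -(R * S * W ^ 2)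
    + W * (1 + 4 * S + 3 * R * S ^ 2 + 5 * S ^ 2 + R ^ 2 + 2 * R + 2 * S ^ 3
        + 3 * R ^ 2 * S + 7 * R * S)
    + (R + 1) ^ 2 * (R + 2 * S + 1 + S ^ 2)

def w₂ (R S W : K) : K :=
  R ^ 2 * S ^ 2 * W ^ 2
    - 2 * W * R * S * (2 * R ^ 2 * S + 6 * R * S + 2 * S ^ 3 + 3 * R * S ^ 2
        + 5 * S ^ 2 + R ^ 2 + 2 * R + 4 * S + 1)
    + (R + 1) ^ 2 * (R + 2 * S + 1 + S ^ 2) ^ 2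

theorem discrim_eq (R S W : K) :
    discrim ((S + 1) ^ 2 * (S * W + (R + 1) ^ 2)) (-w₁ R S W) (W * (1 + R + S) ^ 3)
      = (R - W + 1) ^ 2 * w₂ R S W := by
  unfold discrim w₁ w₂
  ring

theorem equation_of_quadratic_eq_zero {R S W X Y F₁ w : K}
    (hS1 : S + 1 ≠ 0) (hR1 : R + 1 ≠ 0) (hRS1 : 1 + R + S ≠ 0)
    (hX : X = R / (S + 1) ^ 2) (hY : Y = S / (R + 1) ^ 2) (hF₁ : F₁ = R * S / (1 + R + S) ^ 3)
    (hQ : (S + 1) ^ 2 * (S * W + (R + 1) ^ 2) * (w * w) + -w₁ R S W * w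
      + W * (1 + R + S) ^ 3 = 0) :
    Y * (1 - w) * (X - w * F₁) * W
      = w * F₁ * (-(X * Y * W ^ 2) + X * Y * W - X * W + 1 - w + X) := by
  subst hX hY hF₁
  unfold w₁ at hQ
  linear_combination (norm := (field_simp; ring))
    R * S / ((1 + R + S) ^ 3 * (S + 1) ^ 2 * (R + 1) ^ 2) * hQ

end BrownTutte

/-- Closed-form solution of the Brown–Tutte quadratic equation for rooted
non-separable planar maps, via the algebraic parametrization `R`, `S`. -/
theorem stmt_9 (R S W : ℂ)
    (hS1 : S + 1 ≠ 0) (hR1 : R + 1 ≠ 0) (hRS1 : 1 + R + S ≠ 0)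
    (hden : S * W + (R + 1) ^ 2 ≠ 0)
    (X Y F₁ w₁ w₂ : ℂ)
    (hX : X = R / (S + 1) ^ 2)
    (hY : Y = S / (R + 1) ^ 2)
    (hF₁ : F₁ = R * S / (1 + R + S) ^ 3)
    (hw₁ : w₁ = -(R * S * W ^ 2)
      + W * (1 + 4 * S + 3 * R * S ^ 2 + 5 * S ^ 2 + R ^ 2 + 2 * R + 2 * S ^ 3
          + 3 * R ^ 2 * S + 7 * R * S)
      + (R + 1) ^ 2 * (R + 2 * S + 1 + S ^ 2))
    (hw₂ : w₂ = R ^ 2 * S ^ 2 * W ^ 2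
      - 2 * W * R * S * (2 * R ^ 2 * S + 6 * R * S + 2 * S ^ 3 + 3 * R * S ^ 2
          + 5 * S ^ 2 + R ^ 2 + 2 * R + 4 * S + 1)
      + (R + 1) ^ 2 * (R + 2 * S + 1 + S ^ 2) ^ 2) :
    ∀ s : ℂ, s ^ 2 = w₂ →
      ∀ w : ℂ, w = (w₁ + (R - W + 1) * s) / (2 * (S + 1) ^ 2 * (S * W + (R + 1) ^ 2)) →
        Y * (1 - w) * (X - w * F₁) * W
          = w * F₁ * (-(X * Y * W ^ 2) + X * Y * W - X * W + 1 - w + X) := by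
  intro s hs w hw
  replace hw₁ : w₁ = BrownTutte.w₁ R S W := hw₁
  replace hw₂ : w₂ = BrownTutte.w₂ R S W := hw₂
  subst hw₁ hw₂
  have hA : (S + 1) ^ 2 * (S * W + (R + 1) ^ 2) ≠ 0 := mul_ne_zero (pow_ne_zero _ hS1) hden
  have hdiscrim : discrim ((S + 1) ^ 2 * (S * W + (R + 1) ^ 2)) (-BrownTutte.w₁ R S W)
      (W * (1 + R + S) ^ 3) = ((R - W + 1) * s) * ((R - W + 1) * s) := by
    rw [BrownTutte.discrim_eq, ← hs]
    ring
  have hroot := (quadratic_eq_zero_iff hA hdiscrim w).mpr (Or.inl (by rw [hw, neg_neg]; ring))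
  exact BrownTutte.equation_of_quadratic_eq_zero hS1 hR1 hRS1 hX hY hF₁ hroot
end

section
/- For every real z > 0, set ũ = −1/3 + √(4/9 + 1/(3z)) and r = ũ / ( z·(1 + z(1+ũ)²)² ). Then 3zũ² + 2zũ − z − 1 = 0, and consequently, with Φ(x,u) = u − x z (1 + z(1+u)²)², both Φ(r, ũ) = 0 and ∂Φ/∂u (r, ũ) = 0 hold; explicitly, 4 r z² (1+ũ)(1 + z(1+ũ)²) = 1. -/
/-!
Write `D = 1 + z(1+ũ)²`. Since `ũ + 1/3 = √(4/9 + 1/(3z))`, squaring gives the quadratic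
`3zũ² + 2zũ = z + 1`, which is the same as `D = 4zũ(1+ũ)`. The choice of `r` is exactly
`Φ(r, ũ) = 0`, i.e. `r z D² = ũ`, and `∂Φ/∂u (r, ũ) = 1 - 4 r z² (1+ũ) D`, whose last term is
`4zũ(1+ũ)/D = 1`.
-/

lemma quadratic_eq_zero_of_eq_sqrt {z u : ℝ} (hz : 0 < z)
    (hu : u = -1/3 + Real.sqrt (4/9 + 1/(3*z))) :
    3 * z * u^2 + 2 * z * u - z - 1 = 0 := by
  have hroot : u + 1/3 = Real.sqrt (4/9 + 1/(3*z)) := by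
    rw [hu]
    ring
  have hsq : (u + 1/3)^2 = 4/9 + 1/(3*z) := by
    rw [hroot, Real.sq_sqrt (by positivity)]
  field_simp at hsq
  linear_combination hsq / 27

lemma hasDerivAt_phi (x z u : ℝ) :
    HasDerivAt (fun u' => u' - x * z * (1 + z * (1 + u')^2)^2)
      (1 - 4 * x * z^2 * (1 + u) * (1 + z * (1 + u)^2)) u := by
  have h := (hasDerivAt_id' u).sub
    (((((hasDerivAt_id' u).const_add 1).fun_pow 2).const_mul z).const_add 1 |>.fun_pow 2
      |>.const_mul (x * z))
  exact h.congr_deriv (by push_cast; ring)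

lemma critical_identity {x z u : ℝ} (hD : 1 + z * (1 + u)^2 ≠ 0)
    (hΦ : x * z * (1 + z * (1 + u)^2)^2 = u)
    (hquad : 3 * z * u^2 + 2 * z * u - z - 1 = 0) :
    4 * x * z^2 * (1 + u) * (1 + z * (1 + u)^2) = 1 := by
  apply mul_right_cancel₀ hD
  linear_combination 4 * z * (1 + u) * hΦ + hquad

/-- For fixed `z > 0`, the explicit point `(r, ũ)` is the solution of the
characteristic system for the algebraic function `u(x,z)` arising in the
enumeration of 3-connected planar graphs. -/
theorem stmt_10 (z : ℝ) (hz : 0 < z)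
    (u r : ℝ)
    (hu : u = -1/3 + Real.sqrt (4/9 + 1/(3*z)))
    (hr : r = u / (z * (1 + z * (1 + u)^2)^2))
    (Φ : ℝ → ℝ → ℝ)
    (hΦ : ∀ x u', Φ x u' = u' - x * z * (1 + z * (1 + u')^2)^2) :
    3 * z * u^2 + 2 * z * u - z - 1 = 0 ∧
    Φ r u = 0 ∧
    deriv (fun u' => Φ r u') u = 0 ∧
    4 * r * z^2 * (1 + u) * (1 + z * (1 + u)^2) = 1 := by
  have hquad := quadratic_eq_zero_of_eq_sqrt hz hu
  have hD : 1 + z * (1 + u)^2 ≠ 0 := by positivity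
  have hru : r * z * (1 + z * (1 + u)^2)^2 = u := by
    rw [hr]
    field_simp
  have hcrit := critical_identity hD hru hquad
  have hΦr : (fun u' => Φ r u') = fun u' => u' - r * z * (1 + z * (1 + u')^2)^2 :=
    funext (hΦ r)
  refine ⟨hquad, by rw [hΦ, hru, sub_self], ?_, hcrit⟩
  rw [hΦr, (hasDerivAt_phi r z u).deriv, hcrit, sub_self]
end

section
/- Let u > 1/3 be real and set v = (1+u)/(3u−1), z = v/(1+u)², and x = u/(z(1+v)²). Then v = z(1+u)² and u = xz(1+v)² (so (x,z,u,v) satisfies the defining system), the branch-point condition (1+u)(1+v) = 4uv holds, equivalently 4 x z² (1+u)(1 + z(1+u)²) = 1, and moreover x = (1+u)(3u−1)³/(16u). -/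
/-! On the branch-point curve, `v (3u - 1) = 1 + u` rewrites `(1+u)(1+v) - 4uv = 1 + u - v(3u - 1)` to
zero. The second form of the branch condition comes from the identity
`4xz²(1+u)(1+v) · (1+u)(1+v) = 4 · z(1+u)² · xz(1+v)² = 4uv`, valid on the whole system. -/

section BranchPoint

variable {K : Type*}

theorem branch_condition_of_mul_eq [CommRing K] {u v : K} (h : v * (3 * u - 1) = 1 + u) :
    (1 + u) * (1 + v) = 4 * u * v := by
  linear_combination -h

theorem branch_form_mul_eq [CommRing K] {u v x z : K}
    (hv : v = z * (1 + u) ^ 2) (hu : u = x * z * (1 + v) ^ 2) :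
    4 * x * z ^ 2 * (1 + u) * (1 + z * (1 + u) ^ 2) * ((1 + u) * (1 + v)) = 4 * u * v := by
  linear_combination (-4 * x * z ^ 2 * (1 + u) ^ 2 * (1 + v) - 4 * u) * hv
    - 4 * z * (1 + u) ^ 2 * hu

theorem branch_condition_iff [Field K] [NeZero (4 : K)] {u v x z : K} (hu0 : u ≠ 0) (hv0 : v ≠ 0)
    (hv : v = z * (1 + u) ^ 2) (hu : u = x * z * (1 + v) ^ 2) :
    (1 + u) * (1 + v) = 4 * u * v ↔ 4 * x * z ^ 2 * (1 + u) * (1 + z * (1 + u) ^ 2) = 1 := by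
  have key := branch_form_mul_eq hv hu
  constructor
  · intro h
    rw [h] at key
    exact (mul_eq_right₀ (by simp [hu0, hv0, NeZero.ne])).mp key
  · intro h
    rwa [h, one_mul] at key

end BranchPoint

/-- For `u > 1/3`, the explicit parametrization of the branch point of the
algebraic system `u = xz(1+v)²`, `v = z(1+u)²` used in the enumeration of
3-connected planar graphs. -/
theorem stmt_11 (u : ℝ) (hu : 1/3 < u)
    (v z x : ℝ)
    (hv : v = (1 + u) / (3 * u - 1))
    (hz : z = v / (1 + u)^2)
    (hx : x = u / (z * (1 + v)^2)) :
    v = z * (1 + u)^2 ∧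
    u = x * z * (1 + v)^2 ∧
    (1 + u) * (1 + v) = 4 * u * v ∧
    4 * x * z^2 * (1 + u) * (1 + z * (1 + u)^2) = 1 ∧
    x = (1 + u) * (3 * u - 1)^3 / (16 * u) := by
  have h3u : 3 * u - 1 ≠ 0 := by linarith
  have hu0 : 0 < u := by linarith
  have hv0 : 0 < v := by rw [hv]; exact div_pos (by linarith) (by linarith)
  have hz0 : 0 < z := by rw [hz]; positivity
  have hvz : v = z * (1 + u) ^ 2 := by rw [hz]; field_simp
  have hux : u = x * z * (1 + v) ^ 2 := by rw [hx]; field_simp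
  have hbranch : (1 + u) * (1 + v) = 4 * u * v :=
    branch_condition_of_mul_eq (by rw [hv, div_mul_cancel₀ _ h3u])
  refine ⟨hvz, hux, hbranch, (branch_condition_iff hu0.ne' hv0.ne' hvz hux).mp hbranch, ?_⟩
  have h1v : 1 + v = 4 * u / (3 * u - 1) := by
    rw [eq_div_iff h3u, add_mul, hv, div_mul_cancel₀ _ h3u]; ring
  rw [hx, hz, h1v, hv]
  field_simp
  ring
end

section
/- Define w₂(u,v,w) = u²v²w² − 2wuv·(2u²v + 6uv + 2v³ + 3uv² + 5v² + u² + 2u + 4v + 1) + (u+1)²·(u + (v+1)²)². Then: (i) w₂(u,v,1) = (1 + 2u + u² + 2v + v² + uv − uv²)²; (ii) ∂w₂/∂w = −2uv·( (6−w)uv + 1 + 2u + u² + 4v + 5v² + 2v³ + 3uv² + 2u²v ); (iii) for all real u > 0, v > 0 and w ∈ [0,1], one has w₂(u,v,w) ≥ w₂(u,v,1) = (1+2u+u²+2v+v²+uv−uv²)² ≥ 0, with strict inequality w₂(u,v,w) > 0 for all w ∈ [0,1). -/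
/-!
Since `w₂` is quadratic in `w`,
`w₂(u,v,w) - w₂(u,v,1) = (1 - w) (2uv Q(u,v) - u²v²(w + 1))`, where `Q` is the coefficient of
`-2wuv`. For `u, v > 0` the second factor is positive when `w ≤ 1`, because `Q > 6uv`;
so on `[0,1]` the minimum of `w₂` is attained at `w = 1`, where `w₂` is a perfect square.
-/

namespace ThreeConnectedPlanar

def w2Coeff (u v : ℝ) : ℝ :=
  2 * u^2 * v + 6 * u * v + 2 * v^3 + 3 * u * v^2 + 5 * v^2 + u^2 + 2 * u + 4 * v + 1

def w2 (u v w : ℝ) : ℝ :=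
  u^2 * v^2 * w^2 - 2 * w * u * v * w2Coeff u v + (u + 1)^2 * (u + (v + 1)^2)^2

theorem w2_one (u v : ℝ) : w2 u v 1 = (1 + 2*u + u^2 + 2*v + v^2 + u*v - u*v^2)^2 := by
  unfold w2 w2Coeff; ring

theorem w2_one_nonneg (u v : ℝ) : 0 ≤ w2 u v 1 :=
  w2_one u v ▸ sq_nonneg _

theorem hasDerivAt_w2 (u v w : ℝ) :
    HasDerivAt (w2 u v) (-(2 * u * v) * (w2Coeff u v - w * u * v)) w := by
  have hquad : w2 u v = fun x => u^2 * v^2 * x^2 - x * (2 * u * v * w2Coeff u v)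
      + (u + 1)^2 * (u + (v + 1)^2)^2 := by
    funext x; unfold w2; ring
  rw [hquad]
  refine (((hasDerivAt_pow 2 w).const_mul (u^2 * v^2)).sub
    (hasDerivAt_mul_const (2 * u * v * w2Coeff u v))).add_const _ |>.congr_deriv ?_
  norm_num; ring

theorem w2_sub_w2_one (u v w : ℝ) :
    w2 u v w - w2 u v 1 = (1 - w) * (2 * u * v * w2Coeff u v - u^2 * v^2 * (w + 1)) := by
  unfold w2; ring

theorem w2_slope_pos {u v w : ℝ} (hu : 0 < u) (hv : 0 < v) (hw : w ≤ 1) :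
    0 < 2 * u * v * w2Coeff u v - u^2 * v^2 * (w + 1) := by
  have huv : 0 < u * v := mul_pos hu hv
  have hcoeff : 6 * (u * v) < w2Coeff u v := by unfold w2Coeff; nlinarith [sq_pos_of_pos hu]
  have h12 : 12 * (u * v)^2 < 2 * (u * v) * w2Coeff u v := by nlinarith
  nlinarith [mul_le_mul_of_nonneg_left (by linarith : w + 1 ≤ 2) (sq_nonneg (u * v))]

theorem w2_one_le_w2 {u v w : ℝ} (hu : 0 < u) (hv : 0 < v) (hw : w ≤ 1) :
    w2 u v 1 ≤ w2 u v w := by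
  have := w2_sub_w2_one u v w
  nlinarith [mul_nonneg (sub_nonneg.2 hw) (w2_slope_pos hu hv hw).le]

theorem w2_one_lt_w2 {u v w : ℝ} (hu : 0 < u) (hv : 0 < v) (hw : w < 1) :
    w2 u v 1 < w2 u v w := by
  have := w2_sub_w2_one u v w
  nlinarith [mul_pos (sub_pos.2 hw) (w2_slope_pos hu hv hw.le)]

end ThreeConnectedPlanar

open ThreeConnectedPlanar in
/-- Properties of the polynomial `w₂(u,v,w)` appearing under the square root in
the generating function of edge-rooted 3-connected planar graphs: its value at
`w = 1`, its `w`-derivative, and its positivity for `w ∈ [0,1]`. -/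
theorem stmt_12 (w₂ : ℝ → ℝ → ℝ → ℝ)
    (hw₂ : ∀ u v w, w₂ u v w = u^2 * v^2 * w^2
      - 2 * w * u * v * (2 * u^2 * v + 6 * u * v + 2 * v^3 + 3 * u * v^2
          + 5 * v^2 + u^2 + 2 * u + 4 * v + 1)
      + (u + 1)^2 * (u + (v + 1)^2)^2) :
    (∀ u v : ℝ, w₂ u v 1 = (1 + 2*u + u^2 + 2*v + v^2 + u*v - u*v^2)^2) ∧
    (∀ u v w : ℝ, deriv (fun w' => w₂ u v w') w
      = -(2 * u * v) * ((6 - w) * u * v + 1 + 2*u + u^2 + 4*v + 5*v^2 + 2*v^3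
          + 3*u*v^2 + 2*u^2*v)) ∧
    (∀ u v w : ℝ, 0 < u → 0 < v → w ∈ Set.Icc (0:ℝ) 1 →
      w₂ u v w ≥ w₂ u v 1 ∧ w₂ u v 1 = (1 + 2*u + u^2 + 2*v + v^2 + u*v - u*v^2)^2 ∧
      0 ≤ w₂ u v 1) ∧
    (∀ u v w : ℝ, 0 < u → 0 < v → w ∈ Set.Ico (0:ℝ) 1 → 0 < w₂ u v w) := by
  obtain rfl : w₂ = w2 := funext₃ hw₂
  refine ⟨w2_one, fun u v w => ?_, fun u v w hu hv hw => ?_, fun u v w hu hv hw => ?_⟩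
  · rw [(hasDerivAt_w2 u v w).deriv, w2Coeff]; ring
  · exact ⟨w2_one_le_w2 hu hv hw.2, w2_one u v, w2_one_nonneg u v⟩
  · exact (w2_one_nonneg u v).trans_lt (w2_one_lt_w2 hu hv hw.2)
end

section
/- Let x, y, α ∈ ℂ with x ≠ 0. Let V ⊂ ℂ be a disc centred at 0 and T : V → ℂ analytic with T(0) = T'(0) = 0, and set G(s) = ∫₀^s T(t)/t dt (analytic on V, integrating along the segment from 0 to s). Let U ⊂ ℂ be a disc centred at 0 and D : U → ℂ analytic with D(0) = 0, D(w) ≠ 0 for w ∈ U \ {0}, D(U) ⊆ V, 1 + yw ≠ 0 and 1 + D(w) ≠ 0 on U, satisfying 1 + D(w) = (1 + yw)·exp( α·D(w) + T(D(w)) / (x²·D(w)) ) for all w ∈ U \ {0}. Let B : U → ℂ be analytic with B(0) = 0 and B'(w) = x y (1 + D(w))/(1 + yw) on U. Then for all w ∈ U \ {0}: B(w) = x·( D(w) − α·D(w)·(1 + D(w)/2) ) − ((1 + D(w))/(x·D(w)))·T(D(w)) + (1/x)·G(D(w)), and the right-hand side extends analytically to w = 0 with value 0. -/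
/-!
Write `T s = s Q(s)` with `Q = dslope T 0`, so that `G' = Q` and `Q(0) = T'(0) = 0`. The
right-hand side is `H ∘ D` for `H(s) = x (s - α s (1 + s/2)) - (1 + s) Q(s)/x + G(s)/x`, which is
analytic at `s = 0` and vanishes there. With `ψ(s) = α s + Q(s)/x²` one finds
`H'(s) = x (1 - (1 + s) ψ'(s))`, while logarithmic differentiation of
`1 + D = (1 + y w) exp (ψ D)` gives `D' (1 - (1 + D) ψ'(D)) = y (1 + D)/(1 + y w)`. Hence
`(H ∘ D)' = B'` off `w = 0`, by continuity also at `0`, and `B = H ∘ D` since both vanish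
at `0`.
-/

open Filter Topology Metric Set Complex

theorem AnalyticOnNhd.dslope {𝕜 E : Type*} [NontriviallyNormedField 𝕜] [NormedAddCommGroup E]
    [NormedSpace 𝕜 E] {f : 𝕜 → E} {s : Set 𝕜} (hf : AnalyticOnNhd 𝕜 f s) (a : 𝕜) :
    AnalyticOnNhd 𝕜 (dslope f a) s := by
  intro z hz
  rcases eq_or_ne z a with rfl | hza
  · obtain ⟨p, hp⟩ := hf z hz
    exact hp.has_fpower_series_dslope_fslope.analyticAt
  · have hslope : AnalyticAt 𝕜 (fun w ↦ (w - a)⁻¹ • (f w - f a)) z :=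
      ((analyticAt_id.sub analyticAt_const).inv (sub_ne_zero.2 hza)).smul
        ((hf z hz).sub analyticAt_const)
    refine hslope.congr ?_
    filter_upwards [eventually_ne_nhds hza] with w hw
    rw [dslope_of_ne _ hw, slope_def_module]

theorem AnalyticOnNhd.eqOn_of_deriv_eq_of_ne {𝕜 E : Type*} [RCLike 𝕜] [NormedAddCommGroup E]
    [NormedSpace 𝕜 E] [CompleteSpace E] {f g : 𝕜 → E} {U : Set 𝕜} {c z₀ : 𝕜}
    (hf : AnalyticOnNhd 𝕜 f U) (hg : AnalyticOnNhd 𝕜 g U) (hU : IsOpen U)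
    (hU' : IsPreconnected U) (hfg' : ∀ z ∈ U, z ≠ c → deriv f z = deriv g z)
    (hz₀ : z₀ ∈ U) (hfg : f z₀ = g z₀) : EqOn f g U := by
  refine hU.eqOn_of_deriv_eq hU' hf.differentiableOn hg.differentiableOn (fun z hz ↦ ?_) hz₀ hfg
  rcases eq_or_ne z c with rfl | hzc
  · refine hf.deriv.eqOn_of_preconnected_of_frequently_eq hg.deriv hU' hz
      (Eventually.frequently ?_) hz
    filter_upwards [self_mem_nhdsWithin, nhdsWithin_le_nhds (hU.mem_nhds hz)] with w hwz hw
    exact hfg' w hw hwz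
  · exact hfg' z hz hzc

theorem div_eq_dslope_zero {T : ℂ → ℂ} (hT0 : T 0 = 0) {s : ℂ} (hs : s ≠ 0) :
    T s / s = dslope T 0 s := by
  rw [dslope_of_ne _ hs, slope_def_field, hT0, sub_zero, sub_zero]

theorem mul_one_sub_eq_of_one_add_eventuallyEq_mul_exp {D ψ : ℂ → ℂ} {y w d p : ℂ}
    (hD : HasDerivAt D d w) (hψ : HasDerivAt ψ p (D w)) (hyw : 1 + y * w ≠ 0)
    (hDψ : (fun z ↦ 1 + D z) =ᶠ[𝓝 w] fun z ↦ (1 + y * z) * exp (ψ (D z))) :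
    d * (1 - (1 + D w) * p) = y * (1 + D w) / (1 + y * w) := by
  have hrhs : HasDerivAt (fun z ↦ (1 + y * z) * exp (ψ (D z)))
      (y * exp (ψ (D w)) + (1 + y * w) * (exp (ψ (D w)) * (p * d))) w := by
    have hlin : HasDerivAt (fun z : ℂ ↦ 1 + y * z) y w := by
      simpa using ((hasDerivAt_id w).const_mul y).const_add 1
    exact hlin.mul (hψ.comp w hD).cexp
  have hd := (hD.const_add 1).unique (hrhs.congr_of_eventuallyEq hDψ)
  have hw : 1 + D w = (1 + y * w) * exp (ψ (D w)) := hDψ.eq_of_nhds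
  rw [hw, mul_div_assoc, mul_div_cancel_left₀ _ hyw]
  linear_combination hd

/-- The function `H` above, with `Q` standing for `dslope T 0`. -/
noncomputable def closedForm (x α : ℂ) (Q G : ℂ → ℂ) (s : ℂ) : ℂ :=
  x * (s - α * s * (1 + s / 2)) - (1 + s) * Q s / x + G s / x

theorem hasDerivAt_closedForm {x α s : ℂ} {Q G : ℂ → ℂ} (hx : x ≠ 0)
    (hQ : DifferentiableAt ℂ Q s) (hG : HasDerivAt G (Q s) s) :
    HasDerivAt (closedForm x α Q G) (x * (1 - (1 + s) * (α + deriv Q s / x ^ 2))) s := by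
  have hpoly : HasDerivAt (fun s : ℂ ↦ x * (s - α * s * (1 + s / 2)))
      (x * (1 - (α * 1 * (1 + s / 2) + α * s * (1 / 2)))) s :=
    ((hasDerivAt_id' s).sub (((hasDerivAt_id' s).const_mul α).mul
      (((hasDerivAt_id' s).div_const 2).const_add 1))).const_mul x
  have hQ' : HasDerivAt (fun s ↦ (1 + s) * Q s / x) ((1 * Q s + (1 + s) * deriv Q s) / x) s :=
    (((hasDerivAt_id' s).const_add 1).mul hQ.hasDerivAt).div_const x
  refine ((hpoly.sub hQ').add (hG.div_const x)).congr_deriv ?_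
  field_simp
  ring

theorem AnalyticOnNhd.closedForm {x α : ℂ} {Q G : ℂ → ℂ} {U : Set ℂ} (hQ : AnalyticOnNhd ℂ Q U)
    (hG : AnalyticOnNhd ℂ G U) : AnalyticOnNhd ℂ (closedForm x α Q G) U := by
  intro s hs
  have hQs := hQ s hs
  have hGs := hG s hs
  unfold _root_.closedForm
  fun_prop

theorem closedForm_dslope {x α s : ℂ} {T G : ℂ → ℂ} (hT0 : T 0 = 0) (hs : s ≠ 0) :
    closedForm x α (dslope T 0) G s =
      x * (s - α * s * (1 + s / 2)) - (1 + s) / (x * s) * T s + 1 / x * G s := by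
  rw [closedForm, ← div_eq_dslope_zero hT0 hs]
  ring

theorem hasDerivAt_closedForm_comp {x y α w : ℂ} {Q G D : ℂ → ℂ} (hx : x ≠ 0)
    (hyw : 1 + y * w ≠ 0) (hD : DifferentiableAt ℂ D w) (hQ : DifferentiableAt ℂ Q (D w))
    (hG : HasDerivAt G (Q (D w)) (D w))
    (hDQ : (fun z ↦ 1 + D z) =ᶠ[𝓝 w] fun z ↦ (1 + y * z) * exp (α * D z + Q (D z) / x ^ 2)) :
    HasDerivAt (closedForm x α Q G ∘ D) (x * y * (1 + D w) / (1 + y * w)) w := by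
  have hψ : HasDerivAt (fun s ↦ α * s + Q s / x ^ 2) (α * 1 + deriv Q (D w) / x ^ 2) (D w) :=
    ((hasDerivAt_id' _).const_mul α).add (hQ.hasDerivAt.div_const _)
  have key := mul_one_sub_eq_of_one_add_eventuallyEq_mul_exp hD.hasDerivAt hψ hyw hDQ
  refine ((hasDerivAt_closedForm hx hQ hG).comp w hD.hasDerivAt).congr_deriv ?_
  rw [mul_one] at key
  linear_combination x * key

theorem stmt_13_general (x y α : ℂ) (hx : x ≠ 0)
    (rV : ℝ)
    (T G : ℂ → ℂ)
    (hTa : AnalyticOnNhd ℂ T (Metric.ball (0 : ℂ) rV))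
    (hT0 : T 0 = 0) (hT'0 : deriv T 0 = 0)
    (hGa : AnalyticOnNhd ℂ G (Metric.ball (0 : ℂ) rV))
    (hG0 : G 0 = 0)
    (hG' : ∀ s ∈ Metric.ball (0 : ℂ) rV, s ≠ 0 → deriv G s = T s / s)
    (rU : ℝ)
    (D B : ℂ → ℂ)
    (hDa : AnalyticOnNhd ℂ D (Metric.ball (0 : ℂ) rU)) (hD0 : D 0 = 0)
    (hDne : ∀ w ∈ Metric.ball (0 : ℂ) rU, w ≠ 0 → D w ≠ 0)
    (hDmaps : Set.MapsTo D (Metric.ball (0 : ℂ) rU) (Metric.ball (0 : ℂ) rV))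
    (hyne : ∀ w ∈ Metric.ball (0 : ℂ) rU, 1 + y * w ≠ 0)
    (heq : ∀ w ∈ Metric.ball (0 : ℂ) rU, w ≠ 0 →
      1 + D w = (1 + y * w) * Complex.exp (α * D w + T (D w) / (x ^ 2 * D w)))
    (hBa : AnalyticOnNhd ℂ B (Metric.ball (0 : ℂ) rU)) (hB0 : B 0 = 0)
    (hB' : ∀ w ∈ Metric.ball (0 : ℂ) rU, deriv B w = x * y * (1 + D w) / (1 + y * w)) :
    (∀ w ∈ Metric.ball (0 : ℂ) rU, w ≠ 0 →
      B w = x * (D w - α * D w * (1 + D w / 2))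
        - (1 + D w) / (x * D w) * T (D w) + 1 / x * G (D w)) ∧
    (∃ Φ : ℂ → ℂ, AnalyticOnNhd ℂ Φ (Metric.ball (0 : ℂ) rU) ∧ Φ 0 = 0 ∧
      ∀ w ∈ Metric.ball (0 : ℂ) rU, w ≠ 0 →
        Φ w = x * (D w - α * D w * (1 + D w / 2))
          - (1 + D w) / (x * D w) * T (D w) + 1 / x * G (D w)) := by
  set Q := dslope T 0
  have hQa : AnalyticOnNhd ℂ Q (ball 0 rV) := hTa.dslope 0
  set Φ := closedForm x α Q G ∘ D
  have hΦa : AnalyticOnNhd ℂ Φ (ball 0 rU) := fun w hw ↦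
    ((hQa.closedForm hGa) _ (hDmaps hw)).comp (hDa w hw)
  have hΦ0 : Φ 0 = 0 := by
    simp [Φ, closedForm, hD0, hG0, Q, dslope_same, hT'0]
  have hΦ (w) (hw : w ∈ ball 0 rU) (hw0 : w ≠ 0) : Φ w = x * (D w - α * D w * (1 + D w / 2))
      - (1 + D w) / (x * D w) * T (D w) + 1 / x * G (D w) :=
    closedForm_dslope hT0 (hDne w hw hw0)
  have hDQ (w) (hw : w ∈ ball 0 rU) (hw0 : w ≠ 0) :
      1 + D w = (1 + y * w) * exp (α * D w + Q (D w) / x ^ 2) := by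
    rw [heq w hw hw0, div_mul_eq_div_div_swap, div_eq_dslope_zero hT0 (hDne w hw hw0)]
  have hderiv (w) (hw : w ∈ ball 0 rU) (hw0 : w ≠ 0) : deriv B w = deriv Φ w := by
    have hGw : HasDerivAt G (Q (D w)) (D w) := by
      have := (hGa _ (hDmaps hw)).differentiableAt.hasDerivAt
      rwa [hG' _ (hDmaps hw) (hDne w hw hw0), div_eq_dslope_zero hT0 (hDne w hw hw0)] at this
    have hev : ∀ᶠ z in 𝓝 w, z ∈ ball 0 rU \ {0} :=
      (isOpen_ball.sdiff isClosed_singleton).mem_nhds ⟨hw, hw0⟩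
    rw [hB' w hw, (hasDerivAt_closedForm_comp hx (hyne w hw) (hDa w hw).differentiableAt
      (hQa _ (hDmaps hw)).differentiableAt hGw (hev.mono fun z hz ↦ hDQ z hz.1 hz.2)).deriv]
  have hBΦ (w) (hw : w ∈ ball 0 rU) : B w = Φ w :=
    hBa.eqOn_of_deriv_eq_of_ne hΦa isOpen_ball (convex_ball 0 rU).isPreconnected hderiv
      (mem_ball_self (pos_of_mem_ball hw)) (hB0.trans hΦ0.symm) hw
  exact ⟨fun w hw hw0 ↦ (hBΦ w hw).trans (hΦ w hw hw0), Φ, hΦa, hΦ0, hΦ⟩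

/-- Closed-form integration for the root-degree generating function of rooted
2-connected planar graphs, with the 3-connected contribution `T` and its
primitive `G(s) = ∫₀^s T(t)/t dt`. -/
theorem stmt_13 (x y α : ℂ) (hx : x ≠ 0)
    (rV : ℝ) (hrV : 0 < rV)
    (T G : ℂ → ℂ)
    (hTa : AnalyticOnNhd ℂ T (Metric.ball (0 : ℂ) rV))
    (hT0 : T 0 = 0) (hT'0 : deriv T 0 = 0)
    (hGa : AnalyticOnNhd ℂ G (Metric.ball (0 : ℂ) rV))
    (hG0 : G 0 = 0)
    (hG' : ∀ s ∈ Metric.ball (0 : ℂ) rV, s ≠ 0 → deriv G s = T s / s)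
    (rU : ℝ) (hrU : 0 < rU)
    (D B : ℂ → ℂ)
    (hDa : AnalyticOnNhd ℂ D (Metric.ball (0 : ℂ) rU)) (hD0 : D 0 = 0)
    (hDne : ∀ w ∈ Metric.ball (0 : ℂ) rU, w ≠ 0 → D w ≠ 0)
    (hDmaps : Set.MapsTo D (Metric.ball (0 : ℂ) rU) (Metric.ball (0 : ℂ) rV))
    (hyne : ∀ w ∈ Metric.ball (0 : ℂ) rU, 1 + y * w ≠ 0)
    (hDne1 : ∀ w ∈ Metric.ball (0 : ℂ) rU, 1 + D w ≠ 0)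
    (heq : ∀ w ∈ Metric.ball (0 : ℂ) rU, w ≠ 0 →
      1 + D w = (1 + y * w) * Complex.exp (α * D w + T (D w) / (x ^ 2 * D w)))
    (hBa : AnalyticOnNhd ℂ B (Metric.ball (0 : ℂ) rU)) (hB0 : B 0 = 0)
    (hB' : ∀ w ∈ Metric.ball (0 : ℂ) rU, deriv B w = x * y * (1 + D w) / (1 + y * w)) :
    (∀ w ∈ Metric.ball (0 : ℂ) rU, w ≠ 0 →
      B w = x * (D w - α * D w * (1 + D w / 2))
        - (1 + D w) / (x * D w) * T (D w) + 1 / x * G (D w)) ∧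
    (∃ Φ : ℂ → ℂ, AnalyticOnNhd ℂ Φ (Metric.ball (0 : ℂ) rU) ∧ Φ 0 = 0 ∧
      ∀ w ∈ Metric.ball (0 : ℂ) rU, w ≠ 0 →
        Φ w = x * (D w - α * D w * (1 + D w / 2))
          - (1 + D w) / (x * D w) * T (D w) + 1 / x * G (D w)) :=
  stmt_13_general x y α hx rV T G hTa hT0 hT'0 hGa hG0 hG' rU D B hDa hD0 hDne hDmaps hyne heq hBa
    hB0 hB'
end
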